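/- For every ε > 0, every δ > 0 and every additive mapping m : ℝ → ℝ (i.e. m(x + y) = m(x) + m(y) for all x, y ∈ ℝ), there exists x_m ∈ ℝ such that |f_G(x_m) − m(x_m)| > δ|x_m|. -/
import Mathlib


/-- Gajda's function `ζ`. -/
noncomputable def zeta (ε : ℝ) (x : ℝ) : ℝ :=
  if 1 ≤ x then ε / 6 else if -1 < x then ε / 6 * x else -(ε / 6)

/-- Gajda's function `f_G x = ∑ₖ 2⁻ᵏ ζ(2ᵏ x)`. -/
noncomputable def fG (ε : ℝ) (x : ℝ) : ℝ := ∑' k : ℕ, zeta ε (2 ^ k * x) / 2 ^ k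

lemma zeta_nonneg {ε : ℝ} (hε : 0 ≤ ε) {y : ℝ} (hy : 0 ≤ y) : 0 ≤ zeta ε y := by
  unfold zeta; split_ifs with h1 h2 <;> nlinarith

lemma abs_zeta_le {ε : ℝ} (hε : 0 ≤ ε) (y : ℝ) : |zeta ε y| ≤ ε / 6 := by
  unfold zeta; split_ifs with h1 h2 <;> rw [abs_le] <;> constructor <;> nlinarith

lemma zeta_eq {ε : ℝ} {y : ℝ} (h0 : 0 < y) (h1 : y ≤ 1) : zeta ε y = ε / 6 * y := by
  unfold zeta; split_ifs with ha hb
  · have : y = 1 := le_antisymm h1 ha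
    rw [this]; ring
  · rfl
  · linarith

lemma m_pow {m : ℝ → ℝ} (hm : ∀ x y : ℝ, m (x + y) = m x + m y) (n : ℕ) :
    m ((2:ℝ)⁻¹ ^ n) = m 1 * (2:ℝ)⁻¹ ^ n := by
  induction n with
  | zero => simp
  | succ n ih =>
    have h : (2:ℝ)⁻¹ ^ (n + 1) + (2:ℝ)⁻¹ ^ (n + 1) = (2:ℝ)⁻¹ ^ n := by ring
    have h2 := hm ((2:ℝ)⁻¹ ^ (n + 1)) ((2:ℝ)⁻¹ ^ (n + 1))
    rw [h, ih] at h2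
    have hp : (2:ℝ)⁻¹ ^ (n + 1) = (2:ℝ)⁻¹ ^ n / 2 := by ring
    linear_combination -h2 / 2

lemma fG_summable {ε : ℝ} (hε : 0 ≤ ε) (x : ℝ) :
    Summable (fun k : ℕ => zeta ε (2 ^ k * x) / 2 ^ k) := by
  apply Summable.of_norm
  refine Summable.of_nonneg_of_le (fun k => norm_nonneg _) (fun k => ?_)
    (summable_geometric_two.mul_left (ε / 6))
  have hk : (0:ℝ) < 2 ^ k := by positivity
  have h1 : ‖zeta ε (2 ^ k * x) / 2 ^ k‖ = |zeta ε (2 ^ k * x)| / 2 ^ k := by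
    rw [Real.norm_eq_abs, abs_div, abs_of_pos hk]
  rw [h1]
  have h2 : ε / 6 * (1 / 2 : ℝ) ^ k = (ε / 6) / 2 ^ k := by
    rw [one_div, inv_pow]; ring
  rw [h2]
  gcongr
  exact abs_zeta_le hε _

/-- For every `δ > 0` and every additive `m : ℝ → ℝ` there is `x` with
`|f_G x - m x| > δ |x|`. -/
theorem stmt2 (ε : ℝ) (hε : 0 < ε) (δ : ℝ) (hδ : 0 < δ)
    (m : ℝ → ℝ) (hm : ∀ x y : ℝ, m (x + y) = m x + m y) :
    ∃ x : ℝ, δ * |x| < |fG ε x - m x| := by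
  obtain ⟨n, hn⟩ := exists_nat_gt ((δ + m 1) * 6 / ε)
  set x : ℝ := (2:ℝ)⁻¹ ^ n with hxdef
  have hx : 0 < x := by positivity
  refine ⟨x, ?_⟩
  have hmx : m x = m 1 * x := m_pow hm n
  have hsum := fG_summable hε.le x
  have hterm : ∀ k ∈ Finset.range (n + 1), zeta ε (2 ^ k * x) / 2 ^ k = ε / 6 * x := by
    intro k hk
    have hk' : k ≤ n := Nat.lt_succ_iff.mp (Finset.mem_range.mp hk)
    have h1 : (0:ℝ) < 2 ^ k * x := by positivity
    have h2 : (2:ℝ) ^ k * x ≤ 1 := by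
      have hle : (2:ℝ) ^ k ≤ 2 ^ n := by
        apply pow_le_pow_right₀ (by norm_num) hk'
      rw [hxdef, inv_pow]
      calc (2:ℝ) ^ k * ((2:ℝ) ^ n)⁻¹ ≤ 2 ^ n * ((2:ℝ) ^ n)⁻¹ := by gcongr
        _ = 1 := by field_simp
    rw [zeta_eq h1 h2]
    have hk0 : (2:ℝ) ^ k ≠ 0 := by positivity
    field_simp
  have hnn : ∀ k ∉ Finset.range (n + 1), 0 ≤ zeta ε (2 ^ k * x) / 2 ^ k := by
    intro k _
    have : (0:ℝ) ≤ 2 ^ k * x := by positivity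
    exact div_nonneg (zeta_nonneg hε.le this) (by positivity)
  have hlow : ((n:ℝ) + 1) * (ε / 6 * x) ≤ fG ε x := by
    have hst := Summable.sum_le_tsum (Finset.range (n + 1)) hnn hsum
    calc ((n:ℝ) + 1) * (ε / 6 * x)
        = ∑ k ∈ Finset.range (n + 1), zeta ε (2 ^ k * x) / 2 ^ k := by
          rw [Finset.sum_congr rfl hterm, Finset.sum_const, Finset.card_range]
          push_cast; ring
      _ ≤ fG ε x := hst
  have hdiv : (δ + m 1) * 6 < (n:ℝ) * ε := (div_lt_iff₀ hε).mp hn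
  have h3 : (δ + m 1) * x < ((n:ℝ) + 1) * (ε / 6) * x := by
    apply mul_lt_mul_of_pos_right _ hx
    nlinarith
  have key : δ * x < fG ε x - m x := by
    rw [hmx]; nlinarith [hlow, h3]
  rw [abs_of_pos hx]
  exact lt_of_lt_of_le key (le_trans (le_abs_self _) le_rfl)
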